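/- arXiv:1603.07238 — 15 statements merged into one kernel-verified Lean document; each statement's English description precedes it below -/
import Mathlib

section
/- Let W be a group acting on a group A, K a normal subgroup of W, and let φ, φ' ∈ Z¹(W, A) be 1-cocycles with φ(k) = φ'(k) for all k ∈ K. Define η : W → A by η(w) = φ'(w) * φ(w)⁻¹. Then: η(w) lies in the centralizer C = {a ∈ A : α_φ(k)(a) = a for all k ∈ K} for every w ∈ W; η(k) = 1 for all k ∈ K; η(w * k) = η(w) and η(k * w) = η(w) for all w ∈ W, k ∈ K; and η satisfies the cocycle relation η(v * w) = η(v) * α_φ(v)(η(w)) for all v, w ∈ W. -/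
/-- For `φ, φ' ∈ Z¹(W, A)` agreeing on a normal subgroup `K ≤ W`,
the map `η(w) = φ'(w) * φ(w)⁻¹` takes values in the centralizer
`C = {a | ∀ k ∈ K, α_φ(k)(a) = a}`, is trivial on `K`, is bi-invariant under `K`,
and satisfies the twisted cocycle relation `η(v*w) = η(v) * α_φ(v)(η(w))`. -/
theorem stmt3 {W A : Type*} [Group W] [Group A] [MulDistribMulAction W A]
    (K : Subgroup W) (hK : K.Normal)
    (φ φ' : W → A)
    (hφ : ∀ v w, φ (v * w) = φ v * (v • φ w))
    (hφ' : ∀ v w, φ' (v * w) = φ' v * (v • φ' w))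
    (hagree : ∀ k ∈ K, φ k = φ' k) :
    (∀ w, ∀ k ∈ K,
      φ k * (k • (φ' w * (φ w)⁻¹)) * (φ k)⁻¹ = φ' w * (φ w)⁻¹) ∧
    (∀ k ∈ K, φ' k * (φ k)⁻¹ = 1) ∧
    (∀ w, ∀ k ∈ K, φ' (w * k) * (φ (w * k))⁻¹ = φ' w * (φ w)⁻¹) ∧
    (∀ w, ∀ k ∈ K, φ' (k * w) * (φ (k * w))⁻¹ = φ' w * (φ w)⁻¹) ∧
    (∀ v w, φ' (v * w) * (φ (v * w))⁻¹ =
      (φ' v * (φ v)⁻¹) * (φ v * (v • (φ' w * (φ w)⁻¹)) * (φ v)⁻¹)) := by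
  -- right K-invariance
  have hright : ∀ w, ∀ k ∈ K, φ' (w * k) * (φ (w * k))⁻¹ = φ' w * (φ w)⁻¹ := by
    intro w k hk
    rw [hφ, hφ', ← hagree k hk]
    group
  -- left K-invariance
  have hleft : ∀ w, ∀ k ∈ K, φ' (k * w) * (φ (k * w))⁻¹ = φ' w * (φ w)⁻¹ := by
    intro w k hk
    have hk' : w⁻¹ * k * w ∈ K := hK.conj_mem' k hk w
    have : k * w = w * (w⁻¹ * k * w) := by group
    rw [this, hright w _ hk']
  refine ⟨?_, ?_, hright, hleft, ?_⟩
  · intro w k hk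
    have h1 : φ' (k * w) * (φ (k * w))⁻¹ =
        φ k * (k • (φ' w * (φ w)⁻¹)) * (φ k)⁻¹ := by
      rw [hφ, hφ', hagree k hk, smul_mul', smul_inv']
      group
    rw [← h1, hleft w k hk]
  · intro k hk
    rw [← hagree k hk, mul_inv_cancel]
  · intro v w
    rw [hφ, hφ', smul_mul', smul_inv']
    group
end

section
/- Let W be a group acting on a group A, K a normal subgroup of W, φ ∈ Z¹(W, A) a 1-cocycle, and C = {a ∈ A : α_φ(k)(a) = a for all k ∈ K}. Then the map η ↦ η·φ (pointwise product, (η·φ)(w) = η(w) * φ(w)) is a bijection from the set of maps η : W → C satisfying η(v * w) = η(v) * α_φ(v)(η(w)) for all v, w ∈ W and η(k) = 1 for all k ∈ K (i.e. 1-cocycles of W/K valued in C for the induced action) onto the set {ψ ∈ Z¹(W, A) : ψ(k) = φ(k) for all k ∈ K} of 1-cocycles of W extending the restriction of φ to K. -/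
/-- For a 1-cocycle `φ ∈ Z¹(W, A)` and a normal subgroup `K ≤ W`, the map
`η ↦ η·φ` is a bijection from the set of maps `η : W → C` (values in the centralizer
`C = {a | ∀ k ∈ K, α_φ(k)(a) = a}`) that are 1-cocycles for the twisted action `α_φ` and
trivial on `K`, onto the set of 1-cocycles `ψ ∈ Z¹(W, A)` with `ψ|_K = φ|_K`. -/
theorem stmt4 {W A : Type*} [Group W] [Group A] [MulDistribMulAction W A]
    (K : Subgroup W) (hK : K.Normal)
    (φ : W → A) (hφ : ∀ v w, φ (v * w) = φ v * (v • φ w)) :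
    ∃ e : {η : W → A //
        (∀ w, η w ∈ {a : A | ∀ k ∈ K, φ k * (k • a) * (φ k)⁻¹ = a}) ∧
        (∀ v w, η (v * w) = η v * (φ v * (v • η w) * (φ v)⁻¹)) ∧
        (∀ k ∈ K, η k = 1)} ≃
      {ψ : W → A // (∀ v w, ψ (v * w) = ψ v * (v • ψ w)) ∧ ∀ k ∈ K, ψ k = φ k},
      ∀ η, (e η).1 = fun w => η.1 w * φ w := by
  refine ⟨⟨fun η => ⟨fun w => η.1 w * φ w, ?_, ?_⟩,
          fun ψ => ⟨fun w => ψ.1 w * (φ w)⁻¹, ?_, ?_, ?_⟩, ?_, ?_⟩, fun η => rfl⟩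
  · -- forward: cocycle
    intro v w
    obtain ⟨η, hC, hcoc, htriv⟩ := η
    simp only [hcoc, hφ, smul_mul']
    group
  · -- forward: equals φ on K
    intro k hk
    obtain ⟨η, hC, hcoc, htriv⟩ := η
    simp [htriv k hk]
  · -- inverse: values in centralizer
    intro w k hk
    obtain ⟨ψ, hcoc, hres⟩ := ψ
    have hk' : w⁻¹ * k * w ∈ K := hK.conj_mem' k hk w
    have hkw : k * w = w * (w⁻¹ * k * w) := by group
    have h1 : ψ (k * w) = ψ w * w • φ (w⁻¹ * k * w) := by
      rw [hkw, hcoc, hres _ hk']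
    have h2 : φ (k * w) = φ w * w • φ (w⁻¹ * k * w) := by
      rw [hkw, hφ]
    have h3 : ψ (k * w) = φ k * k • ψ w := by rw [hcoc, hres _ hk]
    have h4 : φ (k * w) = φ k * k • φ w := hφ k w
    calc φ k * k • (ψ w * (φ w)⁻¹) * (φ k)⁻¹
        = (φ k * k • ψ w) * ((φ k * k • φ w))⁻¹ := by
          rw [smul_mul', smul_inv']; group
      _ = ψ (k * w) * (φ (k * w))⁻¹ := by rw [h3, h4]
      _ = ψ w * (φ w)⁻¹ := by rw [h1, h2, mul_inv_rev]; group
  · -- inverse: twisted cocycle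
    intro v w
    obtain ⟨ψ, hcoc, hres⟩ := ψ
    simp only [hcoc, hφ, smul_mul', smul_inv', mul_inv_rev]
    group
  · -- inverse: trivial on K
    intro k hk
    obtain ⟨ψ, hcoc, hres⟩ := ψ
    simp [hres k hk]
  · intro η; ext w; simp
  · intro ψ; ext w; simp
end

section
/- Let W be a group acting on a group A, K a normal subgroup of W, φ ∈ Z¹(W, A) a 1-cocycle, and C = {a ∈ A : α_φ(k)(a) = a for all k ∈ K}. The bijection η ↦ η·φ between C-valued 1-cocycles of W trivial on K and 1-cocycles of W extending φ|_K descends to cohomology: two such η, η' are cohomologous via an element of C (i.e. ∃c ∈ C with η'(w) = c * η(w) * α_φ(w)(c)⁻¹ for all w) if and only if η·φ and η'·φ are cohomologous as 1-cocycles in Z¹(W, A), and the induced map is a bijection from H¹ of W/K with coefficients C (for the induced action) onto the set of cohomology classes [ψ] ∈ H¹(W, A) such that the restriction of ψ to K is cohomologous to the restriction of φ to K in Z¹(K, A) (K acting on A by restriction of the W-action). -/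
namespace Stmt5

variable (W A : Type*) [Group W] [Group A] [MulDistribMulAction W A]

/-- The set of 1-cocycles of `W` with values in `A`. -/
def Z1 := {ψ : W → A // ∀ v w, ψ (v * w) = ψ v * (v • ψ w)}

variable {W A}

/-- The cohomology relation on `Z¹(W, A)`. -/
def cohom (ψ ψ' : Z1 W A) : Prop := ∃ a : A, ∀ w, ψ'.1 w = a * ψ.1 w * (w • a)⁻¹

/-- The twisted action `α_φ`. -/
def alpha (φ : W → A) (w : W) (a : A) : A := φ w * (w • a) * (φ w)⁻¹

/-- The centralizer `C` of `φ|_K`. -/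
def Cent (K : Subgroup W) (φ : W → A) : Set A := {a | ∀ k ∈ K, alpha φ k a = a}

/-- `C`-valued 1-cocycles of `W` (for the twisted action `α_φ`) which are trivial on `K`,
i.e. 1-cocycles of `W/K` with coefficients in `C`. -/
def Z1Q (K : Subgroup W) (φ : W → A) :=
  {η : W → A // (∀ w, η w ∈ Cent K φ) ∧
    (∀ v w, η (v * w) = η v * alpha φ v (η w)) ∧ (∀ k ∈ K, η k = 1)}

/-- Cohomologous via an element of `C`. -/
def cohomQ (K : Subgroup W) (φ : W → A) (η η' : Z1Q K φ) : Prop :=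
  ∃ c ∈ Cent K φ, ∀ w, η'.1 w = c * η.1 w * (alpha φ w c)⁻¹


lemma alpha_one (φ : W → A) (w : W) : alpha φ w 1 = 1 := by simp [alpha]

lemma cohom_equiv : Equivalence (cohom (W := W) (A := A)) := by
  constructor
  · intro ψ; exact ⟨1, fun w => by simp⟩
  · rintro ψ ψ' ⟨a, h⟩
    refine ⟨a⁻¹, fun w => ?_⟩
    rw [h w]; simp [smul_inv']; group
  · rintro ψ ψ' ψ'' ⟨a, h⟩ ⟨b, h'⟩
    refine ⟨b * a, fun w => ?_⟩
    rw [h' w, h w]; simp [smul_mul']; group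

/-- The map `η ↦ η·φ`. -/
def Fmap (K : Subgroup W) (φ : Z1 W A) (η : Z1Q K φ.1) : Z1 W A :=
  ⟨fun w => η.1 w * φ.1 w, by
    intro v w
    have h := η.2.2.1 v w
    simp only [h, φ.2, alpha, smul_mul']
    group⟩

theorem part1 (K : Subgroup W) (φ : Z1 W A) (η η' : Z1Q K φ.1) :
    cohomQ K φ.1 η η' ↔
      ∃ a : A, ∀ w, η'.1 w * φ.1 w = a * (η.1 w * φ.1 w) * (w • a)⁻¹ := by
  constructor
  · rintro ⟨c, _, h⟩
    refine ⟨c, fun w => ?_⟩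
    rw [h w]; simp only [alpha]; group
  · rintro ⟨a, h⟩
    have hmem : a ∈ Cent K φ.1 := by
      intro k hk
      have := h k
      rw [η.2.2.2 k hk, η'.2.2.2 k hk] at this
      simp only [one_mul] at this
      rw [eq_comm, mul_inv_eq_iff_eq_mul] at this
      simp only [alpha]
      rw [← this]; group
    refine ⟨a, hmem, fun w => ?_⟩
    have := h w
    simp only [alpha]
    calc η'.1 w = (η'.1 w * φ.1 w) * (φ.1 w)⁻¹ := by group
      _ = a * (η.1 w * φ.1 w) * (w • a)⁻¹ * (φ.1 w)⁻¹ := by rw [this]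
      _ = a * η.1 w * (φ.1 w * w • a * (φ.1 w)⁻¹)⁻¹ := by group

/-- The induced map on cohomology. -/
def toFun (K : Subgroup W) (φ : Z1 W A) : Quot (cohomQ K φ.1) →
    {x : Quot (cohom (W := W) (A := A)) // ∃ ψ : Z1 W A, Quot.mk _ ψ = x ∧
      ∃ a : A, ∀ k ∈ K, ψ.1 k = a * φ.1 k * (k • a)⁻¹} :=
  Quot.lift (fun η => ⟨Quot.mk _ (Fmap K φ η), Fmap K φ η, rfl,
      ⟨1, fun k hk => by simp [Fmap, η.2.2.2 k hk]⟩⟩)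
    (fun η η' h => Subtype.ext (Quot.sound ((part1 K φ η η').1 h)))

lemma toFun_inj (K : Subgroup W) (φ : Z1 W A) : Function.Injective (toFun K φ) := by
  intro x y
  induction x using Quot.ind with | _ η => ?_
  induction y using Quot.ind with | _ η' => ?_
  intro h
  have h2 : Quot.mk _ (Fmap K φ η) = Quot.mk _ (Fmap K φ η') := congrArg Subtype.val h
  have h3 : cohom (Fmap K φ η) (Fmap K φ η') :=
    (Equivalence.eqvGen_iff cohom_equiv).mp (Quot.eq.mp h2)
  exact Quot.sound ((part1 K φ η η').2 h3)

lemma toFun_surj (K : Subgroup W) (hK : K.Normal) (φ : Z1 W A) :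
    Function.Surjective (toFun K φ) := by
  rintro ⟨x, ψ, hx, a, ha⟩
  have hcoc' : ∀ v w : W, a⁻¹ * ψ.1 (v * w) * ((v * w) • a) =
      (a⁻¹ * ψ.1 v * (v • a)) * (v • (a⁻¹ * ψ.1 w * (w • a))) := by
    intro v w
    simp only [ψ.2, smul_mul', smul_inv', mul_smul]
    group
  set ψ' : Z1 W A := ⟨fun w => a⁻¹ * ψ.1 w * (w • a), hcoc'⟩ with hψ'
  have hψψ' : cohom ψ ψ' := ⟨a⁻¹, fun w => by simp [hψ', smul_inv']⟩
  set η : W → A := fun w => ψ'.1 w * (φ.1 w)⁻¹ with hη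
  have htriv : ∀ k ∈ K, η k = 1 := by
    intro k hk
    have : ψ'.1 k = φ.1 k := by
      simp only [hψ', ha k hk]
      group
    show ψ'.1 k * (φ.1 k)⁻¹ = 1
    rw [this]; group
  have hcoc : ∀ v w, η (v * w) = η v * alpha φ.1 v (η w) := by
    intro v w
    simp only [hη, hψ', ψ.2, φ.2, alpha, smul_mul', smul_inv', mul_smul]
    group
  have hcent : ∀ w, η w ∈ Cent K φ.1 := by
    intro w k hk
    have h1 : η (k * w) = alpha φ.1 k (η w) := by
      rw [hcoc, htriv k hk, one_mul]
    have hkw : w⁻¹ * k * w ∈ K := by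
      have := hK.conj_mem k hk w⁻¹
      simpa using this
    have h2 : η (k * w) = η w := by
      have he : k * w = w * (w⁻¹ * k * w) := by group
      rw [he, hcoc, htriv _ hkw, alpha_one, mul_one]
    rw [← h1, h2]
  set ηZ : Z1Q K φ.1 := ⟨η, hcent, hcoc, htriv⟩
  have hF : Fmap K φ ηZ = ψ' := by
    apply Subtype.ext
    funext w
    simp [Fmap, ηZ, hη]
  refine ⟨Quot.mk _ ηZ, Subtype.ext ?_⟩
  show Quot.mk _ (Fmap K φ ηZ) = x
  rw [hF, ← hx]
  exact (Quot.sound hψψ').symm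

/-- The bijection `η ↦ η·φ` between `C`-valued 1-cocycles of `W/K` and
1-cocycles of `W` extending `φ|_K` descends to cohomology: `η, η'` are cohomologous via an
element of `C` iff `η·φ` and `η'·φ` are cohomologous in `Z¹(W, A)`, and the induced map is
a bijection from `H¹(W/K, C)` onto the set of classes in `H¹(W, A)` whose restriction to
`K` is cohomologous to `φ|_K` in `Z¹(K, A)`. -/
theorem stmt5 (K : Subgroup W) (hK : K.Normal) (φ : Z1 W A) :
    (∀ η η' : Z1Q K φ.1, cohomQ K φ.1 η η' ↔
      ∃ a : A, ∀ w, η'.1 w * φ.1 w = a * (η.1 w * φ.1 w) * (w • a)⁻¹) ∧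
    ∃ e : Quot (cohomQ K φ.1) ≃
        {x : Quot (cohom (W := W) (A := A)) //
          ∃ ψ : Z1 W A, Quot.mk _ ψ = x ∧
            ∃ a : A, ∀ k ∈ K, ψ.1 k = a * φ.1 k * (k • a)⁻¹},
      ∀ (η : Z1Q K φ.1) (ψ : Z1 W A), ψ.1 = (fun w => η.1 w * φ.1 w) →
        (e (Quot.mk _ η)).1 = Quot.mk _ ψ := by
  refine ⟨part1 K φ, Equiv.ofBijective (toFun K φ) ⟨toFun_inj K φ, toFun_surj K hK φ⟩,
    fun η ψ h => ?_⟩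
  have : ψ = Fmap K φ η := Subtype.ext h
  rw [this]
  rfl

end Stmt5
end

section
/- Let W be a group acting on a group A, K a normal subgroup of W, and φ, φ' ∈ Z¹(W, A) two 1-cocycles with φ(k) = φ'(k) for all k ∈ K. Let C = {a ∈ A : α_φ(k)(a) = a for all k ∈ K}. Then for every w ∈ W there exists c_w ∈ C such that α_{φ'}(w)(c) = c_w * α_φ(w)(c) * c_w⁻¹ for all c ∈ C. In other words, the automorphisms of C induced by α_φ(w) and α_{φ'}(w) differ by an inner automorphism of C, so the induced maps from W to Aut(C)/Inn(C) coincide. -/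
/-- For `φ, φ' ∈ Z¹(W, A)` agreeing on a normal subgroup `K ≤ W`, and
`C = {a | ∀ k ∈ K, α_φ(k)(a) = a}`, for every `w ∈ W` there is `c_w ∈ C` with
`α_{φ'}(w)(c) = c_w * α_φ(w)(c) * c_w⁻¹` for all `c ∈ C`: the automorphisms of `C` induced
by `α_φ(w)` and `α_{φ'}(w)` differ by an inner automorphism of `C`. -/
theorem stmt6 {W A : Type*} [Group W] [Group A] [MulDistribMulAction W A]
    (K : Subgroup W) (hK : K.Normal) (φ φ' : W → A)
    (hφ : ∀ v w, φ (v * w) = φ v * (v • φ w))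
    (hφ' : ∀ v w, φ' (v * w) = φ' v * (v • φ' w))
    (hagree : ∀ k ∈ K, φ k = φ' k) :
    ∀ w, ∃ cw, (∀ k ∈ K, φ k * (k • cw) * (φ k)⁻¹ = cw) ∧
      ∀ c, (∀ k ∈ K, φ k * (k • c) * (φ k)⁻¹ = c) →
        φ' w * (w • c) * (φ' w)⁻¹ = cw * (φ w * (w • c) * (φ w)⁻¹) * cw⁻¹ := by
  intro w
  refine ⟨φ' w * (φ w)⁻¹, ?_, ?_⟩
  · intro k hk
    set m := w⁻¹ * k * w with hm_def
    have hm : m ∈ K := hK.conj_mem' k hk w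
    have hkw : k * w = w * m := by rw [hm_def]; group
    have h1 : φ k * (k • φ w) = φ w * (w • φ m) := by
      rw [← hφ, ← hφ, hkw]
    have h2 : φ k * (k • φ' w) = φ' w * (w • φ m) := by
      rw [hagree k hk, hagree m hm, ← hφ', ← hφ', hkw]
    have e1 : k • φ w = (φ k)⁻¹ * (φ w * w • φ m) := by
      rw [← h1]; group
    have e2 : k • φ' w = (φ k)⁻¹ * (φ' w * w • φ m) := by
      rw [← h2]; group
    rw [smul_mul', smul_inv', e1, e2]
    group
  · intro c _
    group
end

section
/- Let W be a group acting on a group A, K a normal subgroup of W, φ ∈ Z¹(W, A) a 1-cocycle, and C = {a ∈ A : α_φ(k)(a) = a for all k ∈ K}. In the semidirect product A ⋊ W formed with respect to the given W-action (multiplication (a, v) * (b, w) = (a * (v • b), v * w)), the set S_φ := {(c * φ(w), w) : c ∈ C, w ∈ W} is a subgroup of A ⋊ W; moreover, for any other 1-cocycle φ' ∈ Z¹(W, A) with φ'(k) = φ(k) for all k ∈ K, one has S_{φ'} = S_φ. -/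
section GroupIdentities
variable {A : Type*} [Group A]

lemma stmt7_g1 (x y z : A) : x * (y * z * y⁻¹) * x⁻¹ = x * y * z * (x * y)⁻¹ := by group
lemma stmt7_g2 (p a b : A) : p * (a * b⁻¹) * p⁻¹ = (p * a) * (p * b)⁻¹ := by group
lemma stmt7_g3 (x y m : A) : (x * m) * (y * m)⁻¹ = x * y⁻¹ := by group
lemma stmt7_g4 (p a b : A) : p * (a * b) * p⁻¹ = (p * a * p⁻¹) * (p * b * p⁻¹) := by group
lemma stmt7_g5 (c p a b : A) : c * p * (a * b) = (c * (p * a * p⁻¹)) * (p * b) := by group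
lemma stmt7_g6 (p a : A) : p⁻¹ * a = (p⁻¹ * a * p⁻¹⁻¹) * p⁻¹ := by group
lemma stmt7_g7 (p a : A) : p * a⁻¹ * p⁻¹ = (p * a * p⁻¹)⁻¹ := by group

end GroupIdentities

section Aux
variable {W A : Type*} [Group W] [Group A] [MulDistribMulAction W A]

/-- Composition law for the twisted action. -/
lemma stmt7_comp (φ : W → A) (hφ : ∀ v w, φ (v * w) = φ v * (v • φ w))
    (u v : W) (a : A) :
    φ u * (u • (φ v * (v • a) * (φ v)⁻¹)) * (φ u)⁻¹ =
      φ (u * v) * ((u * v) • a) * (φ (u * v))⁻¹ := by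
  rw [smul_mul', smul_mul', smul_inv', ← mul_smul, hφ u v]
  exact stmt7_g1 _ _ _

/-- `φ' w * (φ w)⁻¹` lies in the centralizer `C`. -/
lemma stmt7_d_mem (K : Subgroup W) (hK : K.Normal) (φ φ' : W → A)
    (hφ : ∀ v w, φ (v * w) = φ v * (v • φ w))
    (hφ' : ∀ v w, φ' (v * w) = φ' v * (v • φ' w))
    (hag : ∀ k ∈ K, φ' k = φ k) (w : W) :
    ∀ k ∈ K, φ k * (k • (φ' w * (φ w)⁻¹)) * (φ k)⁻¹ = φ' w * (φ w)⁻¹ := by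
  intro k hk
  have hk' : w⁻¹ * k * w ∈ K := by
    have := hK.conj_mem k hk w⁻¹
    simpa [mul_assoc] using this
  have h1 : φ k * (k • φ' w) = φ' w * (w • φ (w⁻¹ * k * w)) := by
    rw [← hag k hk, ← hφ', ← hag _ hk', ← hφ']
    congr 1
    group
  have h2 : φ k * (k • φ w) = φ w * (w • φ (w⁻¹ * k * w)) := by
    rw [← hφ, ← hφ]
    congr 1
    group
  rw [smul_mul', smul_inv', stmt7_g2, h1, h2, stmt7_g3]

/-- One inclusion of the two sets. -/
lemma stmt7_incl (K : Subgroup W) (hK : K.Normal) (φ φ' : W → A)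
    (hφ : ∀ v w, φ (v * w) = φ v * (v • φ w))
    (hφ' : ∀ v w, φ' (v * w) = φ' v * (v • φ' w))
    (hag : ∀ k ∈ K, φ' k = φ k) :
    ({x : A ⋊[MulDistribMulAction.toMulAut W A] W |
        ∃ c, (∀ k ∈ K, φ k * (k • c) * (φ k)⁻¹ = c) ∧ ∃ w, x = ⟨c * φ' w, w⟩} ⊆
      {x | ∃ c, (∀ k ∈ K, φ k * (k • c) * (φ k)⁻¹ = c) ∧ ∃ w, x = ⟨c * φ w, w⟩}) := by
  rintro x ⟨c, hc, w, rfl⟩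
  refine ⟨c * (φ' w * (φ w)⁻¹), ?_, w, ?_⟩
  · intro k hk
    have hd := stmt7_d_mem K hK φ φ' hφ hφ' hag w k hk
    rw [smul_mul', stmt7_g4, hc k hk, hd]
  · refine SemidirectProduct.ext ?_ rfl
    show c * φ' w = c * (φ' w * (φ w)⁻¹) * φ w
    group

end Aux

/-- In the semidirect product `A ⋊ W` (for the given action of `W` on `A`),
the set `S_φ = {(c * φ w, w) : c ∈ C, w ∈ W}` is a subgroup, where
`C = {a | ∀ k ∈ K, α_φ(k)(a) = a}`; moreover `S_{φ'} = S_φ` for any other 1-cocycle `φ'`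
agreeing with `φ` on `K`. -/
theorem stmt7 {W A : Type*} [Group W] [Group A] [MulDistribMulAction W A]
    (K : Subgroup W) (hK : K.Normal) (φ : W → A)
    (hφ : ∀ v w, φ (v * w) = φ v * (v • φ w)) :
    (∃ S : Subgroup (A ⋊[MulDistribMulAction.toMulAut W A] W),
      (S : Set (A ⋊[MulDistribMulAction.toMulAut W A] W)) =
        {x | ∃ c, (∀ k ∈ K, φ k * (k • c) * (φ k)⁻¹ = c) ∧
          ∃ w, x = ⟨c * φ w, w⟩}) ∧
    (∀ φ' : W → A, (∀ v w, φ' (v * w) = φ' v * (v • φ' w)) →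
      (∀ k ∈ K, φ' k = φ k) →
      ({x : A ⋊[MulDistribMulAction.toMulAut W A] W |
          ∃ c, (∀ k ∈ K, φ k * (k • c) * (φ k)⁻¹ = c) ∧ ∃ w, x = ⟨c * φ' w, w⟩} =
        {x | ∃ c, (∀ k ∈ K, φ k * (k • c) * (φ k)⁻¹ = c) ∧ ∃ w, x = ⟨c * φ w, w⟩})) := by
  have hφ1 : φ 1 = 1 := by
    have := hφ 1 1
    simp at this
    exact this
  have hφinv : ∀ w : W, φ w⁻¹ = (w⁻¹ • φ w)⁻¹ := by
    intro w
    have := hφ w⁻¹ w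
    rw [inv_mul_cancel, hφ1] at this
    exact eq_inv_of_mul_eq_one_left this.symm
  have Ctwist : ∀ (c : A), (∀ k ∈ K, φ k * (k • c) * (φ k)⁻¹ = c) → ∀ v : W,
      ∀ k ∈ K, φ k * (k • (φ v * (v • c) * (φ v)⁻¹)) * (φ k)⁻¹ = φ v * (v • c) * (φ v)⁻¹ := by
    intro c hc v k hk
    have hk' : v⁻¹ * k * v ∈ K := by
      have := hK.conj_mem k hk v⁻¹
      simpa [mul_assoc] using this
    calc φ k * (k • (φ v * (v • c) * (φ v)⁻¹)) * (φ k)⁻¹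
        = φ (k * v) * ((k * v) • c) * (φ (k * v))⁻¹ := stmt7_comp φ hφ k v c
      _ = φ (v * (v⁻¹ * k * v)) * ((v * (v⁻¹ * k * v)) • c) * (φ (v * (v⁻¹ * k * v)))⁻¹ := by
          have : k * v = v * (v⁻¹ * k * v) := by group
          rw [this]
      _ = φ v * (v • (φ (v⁻¹*k*v) * ((v⁻¹*k*v) • c) * (φ (v⁻¹*k*v))⁻¹)) * (φ v)⁻¹ :=
          (stmt7_comp φ hφ v (v⁻¹*k*v) c).symm
      _ = φ v * (v • c) * (φ v)⁻¹ := by rw [hc _ hk']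
  constructor
  · refine ⟨{ carrier := {x | ∃ c, (∀ k ∈ K, φ k * (k • c) * (φ k)⁻¹ = c) ∧
          ∃ w, x = ⟨c * φ w, w⟩}, one_mem' := ?_, mul_mem' := ?_, inv_mem' := ?_ }, rfl⟩
    · rintro x y ⟨c, hc, v, rfl⟩ ⟨d, hd, w, rfl⟩
      refine ⟨c * (φ v * (v • d) * (φ v)⁻¹), ?_, v * w, ?_⟩
      · intro k hk
        rw [smul_mul', stmt7_g4, hc k hk, Ctwist d hd v k hk]
      · refine SemidirectProduct.ext ?_ rfl
        show c * φ v * (v • (d * φ w)) = _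
        rw [smul_mul', hφ v w, stmt7_g5]
    · refine ⟨1, fun k hk => by simp, 1, ?_⟩
      refine SemidirectProduct.ext ?_ rfl
      simp [hφ1]
    · rintro x ⟨c, hc, w, rfl⟩
      have hcinv : ∀ k ∈ K, φ k * (k • c⁻¹) * (φ k)⁻¹ = c⁻¹ := by
        intro k hk
        rw [smul_inv', stmt7_g7, hc k hk]
      refine ⟨φ w⁻¹ * (w⁻¹ • c⁻¹) * (φ w⁻¹)⁻¹, Ctwist c⁻¹ hcinv w⁻¹, w⁻¹, ?_⟩
      refine SemidirectProduct.ext ?_ rfl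
      show w⁻¹ • (c * φ w)⁻¹ = _
      rw [mul_inv_rev, smul_mul', smul_inv', ← hφinv, hφinv w]
      exact stmt7_g6 _ _
  · intro φ' hφ' hag
    apply Set.Subset.antisymm
    · exact stmt7_incl K hK φ φ' hφ hφ' hag
    · have h := stmt7_incl K hK φ' φ hφ' hφ (fun k hk => (hag k hk).symm)
      intro x hx
      have hx' : x ∈ {x : A ⋊[MulDistribMulAction.toMulAut W A] W |
          ∃ c, (∀ k ∈ K, φ' k * (k • c) * (φ' k)⁻¹ = c) ∧ ∃ w, x = ⟨c * φ w, w⟩} := by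
        obtain ⟨c, hc, w, rfl⟩ := hx
        exact ⟨c, fun k hk => by rw [hag k hk]; exact hc k hk, w, rfl⟩
      obtain ⟨c, hc, w, rfl⟩ := h hx'
      exact ⟨c, fun k hk => by rw [← hag k hk]; exact hc k hk, w, rfl⟩
end

section
/- Let W be a group acting on a group A, K a normal subgroup of W, and φ, φ' ∈ Z¹(W, A) two 1-cocycles with φ(k) = φ'(k) for all k ∈ K. Let C = {a ∈ A : α_φ(k)(a) = a for all k ∈ K} and let Z(C) = {z ∈ C : z * c = c * z for all c ∈ C} be its center. Then the twisted actions agree on the center: α_φ(w)(z) = α_{φ'}(w)(z) for every w ∈ W and every z ∈ Z(C). -/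
/-- For `φ, φ' ∈ Z¹(W, A)` agreeing on a normal subgroup `K ≤ W`, the
twisted actions `α_φ` and `α_{φ'}` agree on the center `Z(C)` of the centralizer
`C = {a | ∀ k ∈ K, α_φ(k)(a) = a}`. -/
theorem stmt8 {W A : Type*} [Group W] [Group A] [MulDistribMulAction W A]
    (K : Subgroup W) (hK : K.Normal) (φ φ' : W → A)
    (hφ : ∀ v w, φ (v * w) = φ v * (v • φ w))
    (hφ' : ∀ v w, φ' (v * w) = φ' v * (v • φ' w))
    (hagree : ∀ k ∈ K, φ k = φ' k) :
    ∀ w z, (∀ k ∈ K, φ k * (k • z) * (φ k)⁻¹ = z) →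
      (∀ c, (∀ k ∈ K, φ k * (k • c) * (φ k)⁻¹ = c) → z * c = c * z) →
      φ w * (w • z) * (φ w)⁻¹ = φ' w * (w • z) * (φ' w)⁻¹ := by
  intro w z hz hzc
  have hone : ∀ (ψ : W → A), (∀ v w, ψ (v * w) = ψ v * (v • ψ w)) → ψ 1 = 1 := by
    intro ψ h
    have h1 := h 1 1
    simp only [mul_one, one_smul] at h1
    exact (left_eq_mul.mp h1)
  have hinv : ∀ (ψ : W → A), (∀ v w, ψ (v * w) = ψ v * (v • ψ w)) →
      ∀ v : W, v • ψ v⁻¹ = (ψ v)⁻¹ := by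
    intro ψ h v
    have h1 := h v v⁻¹
    rw [mul_inv_cancel, hone ψ h] at h1
    exact (eq_inv_of_mul_eq_one_right h1.symm)
  -- the element a = φ'(w⁻¹) * φ(w⁻¹)⁻¹ lies in the centralizer C
  have ha : ∀ k ∈ K, φ k * (k • (φ' w⁻¹ * (φ w⁻¹)⁻¹)) * (φ k)⁻¹
      = φ' w⁻¹ * (φ w⁻¹)⁻¹ := by
    intro k hk
    have hk' : w * k * w⁻¹ ∈ K := hK.conj_mem k hk w
    have e1 : φ k * (k • φ w⁻¹) = φ w⁻¹ * (w⁻¹ • φ (w * k * w⁻¹)) := by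
      rw [← hφ, ← hφ]; congr 1; group
    have e2 : φ k * (k • φ' w⁻¹) = φ' w⁻¹ * (w⁻¹ • φ (w * k * w⁻¹)) := by
      rw [hagree k hk, hagree _ hk', ← hφ', ← hφ']; congr 1; group
    calc φ k * (k • (φ' w⁻¹ * (φ w⁻¹)⁻¹)) * (φ k)⁻¹
        = (φ k * (k • φ' w⁻¹)) * (φ k * (k • φ w⁻¹))⁻¹ := by
          rw [smul_mul', smul_inv', mul_inv_rev]; group
      _ = (φ' w⁻¹ * (w⁻¹ • φ (w * k * w⁻¹)))
            * (φ w⁻¹ * (w⁻¹ • φ (w * k * w⁻¹)))⁻¹ := by rw [e1, e2]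
      _ = φ' w⁻¹ * (φ w⁻¹)⁻¹ := by rw [mul_inv_rev]; group
  have hcomm := hzc _ ha
  have hsm : (w • z) * (w • (φ' w⁻¹ * (φ w⁻¹)⁻¹))
      = (w • (φ' w⁻¹ * (φ w⁻¹)⁻¹)) * (w • z) := by
    rw [← smul_mul', ← smul_mul', hcomm]
  have hwa : w • (φ' w⁻¹ * (φ w⁻¹)⁻¹) = (φ' w)⁻¹ * φ w := by
    rw [smul_mul', smul_inv', hinv φ hφ, hinv φ' hφ']; group
  rw [hwa] at hsm
  have h2 : φ' w * ((w • z) * ((φ' w)⁻¹ * φ w)) * (φ w)⁻¹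
      = φ' w * (((φ' w)⁻¹ * φ w) * (w • z)) * (φ w)⁻¹ := by rw [hsm]
  calc φ w * (w • z) * (φ w)⁻¹
      = φ' w * (((φ' w)⁻¹ * φ w) * (w • z)) * (φ w)⁻¹ := by group
    _ = φ' w * ((w • z) * ((φ' w)⁻¹ * φ w)) * (φ w)⁻¹ := h2.symm
    _ = φ' w * (w • z) * (φ' w)⁻¹ := by group
end

section
/- Let W be a group acting on a group A, K a normal subgroup of W, φ ∈ Z¹(W, A) a 1-cocycle, C = {a ∈ A : α_φ(k)(a) = a for all k ∈ K}, and Z(C) the center of C. Then the set of 1-cocycles ψ ∈ Z¹(W, A) satisfying both ψ(k) = φ(k) for all k ∈ K and α_ψ(w)(c) = α_φ(w)(c) for all w ∈ W and all c ∈ C is exactly the set {η·φ : η : W → Z(C) with η(v*w) = η(v) * α_φ(v)(η(w)) for all v, w ∈ W and η(k) = 1 for all k ∈ K}, where (η·φ)(w) = η(w) * φ(w); moreover η ↦ η·φ is a bijection from this set of Z(C)-valued cocycles onto that set of extensions (so the latter is a torsor under Z¹ of W/K with coefficients Z(C)). -/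
namespace Stmt9

variable {W A : Type*} [Group W] [Group A] [MulDistribMulAction W A]

/-- The twisted action `α_φ`. -/
def alpha (φ : W → A) (w : W) (a : A) : A := φ w * (w • a) * (φ w)⁻¹

/-- The centralizer `C` of `φ|_K`. -/
def Cent (K : Subgroup W) (φ : W → A) : Set A := {a | ∀ k ∈ K, alpha φ k a = a}

/-- The center `Z(C)` of the centralizer. -/
def ZCent (K : Subgroup W) (φ : W → A) : Set A :=
  {z | z ∈ Cent K φ ∧ ∀ c ∈ Cent K φ, z * c = c * z}

section Aux

variable {K : Subgroup W} {φ : W → A}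

lemma phi_one (hφ : ∀ v w, φ (v * w) = φ v * (v • φ w)) : φ 1 = 1 := by
  have h := hφ 1 1
  simp only [one_mul, one_smul] at h
  exact (left_eq_mul.mp h)

lemma alpha_one (hφ : ∀ v w, φ (v * w) = φ v * (v • φ w)) (a : A) : alpha φ 1 a = a := by
  simp [alpha, phi_one hφ]

lemma alpha_mul (hφ : ∀ v w, φ (v * w) = φ v * (v • φ w)) (v w : W) (a : A) :
    alpha φ (v * w) a = alpha φ v (alpha φ w a) := by
  simp [alpha, hφ, mul_smul, smul_mul', smul_inv', mul_assoc]

lemma alpha_mem_cent (hK : K.Normal) (hφ : ∀ v w, φ (v * w) = φ v * (v • φ w))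
    {c : A} (hc : c ∈ Cent K φ) (w : W) : alpha φ w c ∈ Cent K φ := by
  intro k hk
  have hk' : w⁻¹ * k * w ∈ K := by simpa using hK.conj_mem k hk w⁻¹
  calc alpha φ k (alpha φ w c) = alpha φ (k * w) c := (alpha_mul hφ _ _ _).symm
    _ = alpha φ (w * (w⁻¹ * k * w)) c := by group
    _ = alpha φ w (alpha φ (w⁻¹ * k * w) c) := alpha_mul hφ _ _ _
    _ = alpha φ w c := by rw [hc _ hk']

lemma alpha_surj_cent (hK : K.Normal) (hφ : ∀ v w, φ (v * w) = φ v * (v • φ w))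
    {c : A} (hc : c ∈ Cent K φ) (w : W) :
    ∃ c' ∈ Cent K φ, alpha φ w c' = c :=
  ⟨alpha φ w⁻¹ c, alpha_mem_cent hK hφ hc w⁻¹, by
    rw [← alpha_mul hφ, mul_inv_cancel, alpha_one hφ]⟩

/-- Forward direction: a `Z(C)`-valued cocycle `η` gives an extension `η·φ`. -/
lemma fwd (hK : K.Normal) (hφ : ∀ v w, φ (v * w) = φ v * (v • φ w))
    (η : W → A) (hZ : ∀ w, η w ∈ ZCent K φ)
    (hcoc : ∀ v w, η (v * w) = η v * alpha φ v (η w)) (htriv : ∀ k ∈ K, η k = 1) :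
    (∀ v w, (fun w => η w * φ w) (v * w) = (fun w => η w * φ w) v * (v • (fun w => η w * φ w) w)) ∧
    (∀ k ∈ K, (fun w => η w * φ w) k = φ k) ∧
    (∀ w, ∀ c ∈ Cent K φ, alpha (fun w => η w * φ w) w c = alpha φ w c) := by
  refine ⟨fun v w => ?_, fun k hk => by simp [htriv k hk], fun w c hc => ?_⟩
  · simp only
    rw [hcoc, hφ]
    simp only [alpha, smul_mul']
    group
  · have hmem := alpha_mem_cent hK hφ hc w
    have hcomm := (hZ w).2 _ hmem
    simp only [alpha] at hcomm ⊢
    rw [mul_inv_rev]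
    calc η w * φ w * w • c * ((φ w)⁻¹ * (η w)⁻¹)
        = η w * (φ w * w • c * (φ w)⁻¹) * (η w)⁻¹ := by group
      _ = (φ w * w • c * (φ w)⁻¹) * η w * (η w)⁻¹ := by rw [hcomm]
      _ = φ w * w • c * (φ w)⁻¹ := by group

/-- Backward direction: an extension `ψ` gives `η = ψ·φ⁻¹` a `Z(C)`-valued cocycle. -/
lemma bwd (hK : K.Normal) (hφ : ∀ v w, φ (v * w) = φ v * (v • φ w))
    (ψ : W → A) (hψ : ∀ v w, ψ (v * w) = ψ v * (v • ψ w))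
    (hψK : ∀ k ∈ K, ψ k = φ k)
    (hψα : ∀ w, ∀ c ∈ Cent K φ, alpha ψ w c = alpha φ w c) :
    (∀ w, (fun w => ψ w * (φ w)⁻¹) w ∈ ZCent K φ) ∧
    (∀ v w, (fun w => ψ w * (φ w)⁻¹) (v * w) =
      (fun w => ψ w * (φ w)⁻¹) v * alpha φ v ((fun w => ψ w * (φ w)⁻¹) w)) ∧
    (∀ k ∈ K, (fun w => ψ w * (φ w)⁻¹) k = 1) := by
  refine ⟨fun w => ⟨?_, ?_⟩, fun v w => ?_, fun k hk => by simp [hψK k hk]⟩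
  · -- η w ∈ Cent
    intro k hk
    have hk' : w⁻¹ * k * w ∈ K := by simpa using hK.conj_mem k hk w⁻¹
    have e1 : ψ (k * w) = φ k * (k • ψ w) := by rw [hψ, hψK k hk]
    have e2 : ψ (k * w) = ψ w * (w • φ (w⁻¹ * k * w)) := by
      have : k * w = w * (w⁻¹ * k * w) := by group
      rw [this, hψ, hψK _ hk']
    have f1 : φ (k * w) = φ k * (k • φ w) := hφ k w
    have f2 : φ (k * w) = φ w * (w • φ (w⁻¹ * k * w)) := by
      have : k * w = w * (w⁻¹ * k * w) := by group
      rw [this, hφ]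
    have hkψ : k • ψ w = (φ k)⁻¹ * (ψ w * (w • φ (w⁻¹ * k * w))) := by
      rw [← e2, e1]; group
    have hkφ : k • φ w = (φ k)⁻¹ * (φ w * (w • φ (w⁻¹ * k * w))) := by
      rw [← f2, f1]; group
    simp only [alpha, smul_mul', smul_inv', hkψ, hkφ]
    group
  · -- η w central in Cent
    intro c hc
    obtain ⟨c', hc', rfl⟩ := alpha_surj_cent hK hφ hc w
    have key : ψ w * (w • c') * (ψ w)⁻¹ = φ w * (w • c') * (φ w)⁻¹ := hψα w c' hc'
    simp only [alpha]
    calc ψ w * (φ w)⁻¹ * (φ w * w • c' * (φ w)⁻¹)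
        = ψ w * w • c' * (φ w)⁻¹ := by group
      _ = (ψ w * w • c' * (ψ w)⁻¹) * (ψ w * (φ w)⁻¹) := by group
      _ = (φ w * w • c' * (φ w)⁻¹) * (ψ w * (φ w)⁻¹) := by rw [key]
  · -- cocycle
    simp only [alpha, hψ, hφ]
    simp only [smul_mul', mul_inv_rev, smul_inv']
    group

end Aux

/-- The set of 1-cocycles `ψ ∈ Z¹(W, A)` extending `φ|_K` and inducing
the same twisted action as `φ` on `C` is exactly the set of `η·φ` for `η` a `Z(C)`-valued
1-cocycle of `W/K` (i.e. trivial on `K`, cocycle for `α_φ`); moreover `η ↦ η·φ` is a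
bijection between these two sets, so the latter is a torsor under `Z¹(W/K, Z(C))`. -/
theorem stmt9 (K : Subgroup W) (hK : K.Normal)
    (φ : W → A) (hφ : ∀ v w, φ (v * w) = φ v * (v • φ w)) :
    ({ψ : W → A | (∀ v w, ψ (v * w) = ψ v * (v • ψ w)) ∧
        (∀ k ∈ K, ψ k = φ k) ∧
        (∀ w, ∀ c ∈ Cent K φ, alpha ψ w c = alpha φ w c)} =
      {ψ | ∃ η : W → A, (∀ w, η w ∈ ZCent K φ) ∧
        (∀ v w, η (v * w) = η v * alpha φ v (η w)) ∧
        (∀ k ∈ K, η k = 1) ∧ ψ = fun w => η w * φ w}) ∧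
    ∃ e : {η : W → A // (∀ w, η w ∈ ZCent K φ) ∧
          (∀ v w, η (v * w) = η v * alpha φ v (η w)) ∧ (∀ k ∈ K, η k = 1)} ≃
        {ψ : W → A // (∀ v w, ψ (v * w) = ψ v * (v • ψ w)) ∧
          (∀ k ∈ K, ψ k = φ k) ∧
          (∀ w, ∀ c ∈ Cent K φ, alpha ψ w c = alpha φ w c)},
      ∀ η, (e η).1 = fun w => η.1 w * φ w := by
  constructor
  · ext ψ
    constructor
    · rintro ⟨hψ, hψK, hψα⟩
      obtain ⟨hZ, hcoc, htriv⟩ := bwd hK hφ ψ hψ hψK hψα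
      exact ⟨fun w => ψ w * (φ w)⁻¹, hZ, hcoc, htriv, by funext w; simp⟩
    · rintro ⟨η, hZ, hcoc, htriv, rfl⟩
      exact fwd hK hφ η hZ hcoc htriv
  · refine ⟨⟨fun η => ⟨fun w => η.1 w * φ w, fwd hK hφ η.1 η.2.1 η.2.2.1 η.2.2.2⟩,
      fun ψ => ⟨fun w => ψ.1 w * (φ w)⁻¹, bwd hK hφ ψ.1 ψ.2.1 ψ.2.2.1 ψ.2.2.2⟩,
      fun η => ?_, fun ψ => ?_⟩, fun η => rfl⟩
    · apply Subtype.ext; funext w; simp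
    · apply Subtype.ext; funext w; simp

end Stmt9
end

section
/- Let W be a group, W' a subgroup of W, G' a group with a W'-action, and G = Ind_{W'}^{W} G' with its translation W-action. Let K be a subgroup of W and K' = K ∩ W'. Then the Shapiro map is well defined on cocycles and cohomology: for every 1-cocycle ĝ ∈ Z¹(K, G) (K acting on G by restriction of the W-action), the map Sh(ĝ) : γ' ↦ ĝ(γ')(1) is a 1-cocycle in Z¹(K', G'); and if ĝ, ĥ ∈ Z¹(K, G) are cohomologous, then Sh(ĝ) and Sh(ĥ) are cohomologous in Z¹(K', G'). -/
/-- Let `W' ≤ W`, `G'` a group with a `W'`-action, and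
`G = Ind_{W'}^{W} G'` the induced group (functions `g : W → G'` with
`g (u * w) = u • g w` for `u ∈ W'`, with `W` acting by `(v • g) w = g (w * v)`).
Let `K ≤ W` and `K' = K ⊓ W'`.  The Shapiro map is well defined on cocycles and on
cohomology: for a 1-cocycle `ĝ ∈ Z¹(K, G)` the map `γ' ↦ ĝ γ' 1` is a 1-cocycle in
`Z¹(K', G')`, and cohomologous cocycles have cohomologous Shapiro images. -/
theorem stmt10 {W G' : Type*} [Group W] [Group G']
    (W' : Subgroup W) [MulDistribMulAction W' G'] (K : Subgroup W)
    (g h : W → W → G')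
    (hgInd : ∀ γ ∈ K, ∀ (u : W') (w : W), g γ (↑u * w) = u • g γ w)
    (hgCoc : ∀ γ ∈ K, ∀ δ ∈ K, ∀ w, g (γ * δ) w = g γ w * g δ (w * γ))
    (hhInd : ∀ γ ∈ K, ∀ (u : W') (w : W), h γ (↑u * w) = u • h γ w)
    (hhCoc : ∀ γ ∈ K, ∀ δ ∈ K, ∀ w, h (γ * δ) w = h γ w * h δ (w * γ)) :
    (∀ γ' δ' : W, γ' ∈ K → ∀ (hW : γ' ∈ W'), δ' ∈ K → δ' ∈ W' →
      g (γ' * δ') 1 = g γ' 1 * ((⟨γ', hW⟩ : W') • g δ' 1)) ∧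
    ((∃ k : W → G', (∀ (u : W') (w : W), k (↑u * w) = u • k w) ∧
        ∀ γ ∈ K, ∀ w, h γ w = k w * g γ w * (k (w * γ))⁻¹) →
      ∃ k' : G', ∀ γ' : W, γ' ∈ K → ∀ (hW : γ' ∈ W'),
        h γ' 1 = k' * g γ' 1 * (((⟨γ', hW⟩ : W') • k'))⁻¹) := by
  constructor
  · intro γ' δ' hK hW hKd _
    have h1 := hgCoc γ' hK δ' hKd 1
    have h2 := hgInd δ' hKd ⟨γ', hW⟩ 1
    simp only [one_mul, mul_one] at h1 h2 ⊢
    rw [h1, h2]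
  · rintro ⟨k, hkInd, hk⟩
    refine ⟨k 1, fun γ' hK hW => ?_⟩
    have := hk γ' hK 1
    have h2 := hkInd ⟨γ', hW⟩ 1
    simp only [one_mul, mul_one] at this h2 ⊢
    rw [this, h2]
end

section
/- Let W be a group, W' a subgroup of W, and K a normal subgroup of W contained in W'. Let G' be a group with a W'-action and G = Ind_{W'}^{W} G' with its translation W-action. If ĝ, ĥ ∈ Z¹(W, G) are two 1-cocycles such that ĝ(γ)(1) = ĥ(γ)(1) for all γ ∈ K, then the restrictions of ĝ and ĥ to K are cohomologous: there exists k ∈ G with ĥ(γ) = k * ĝ(γ) * (γ • k)⁻¹ for all γ ∈ K. -/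
/-!
View `G = Ind_{W'}^{W} G'` inside the coinduced group of all maps `W → G'`, whose first
cohomology vanishes: `k₀ w = ĥ(w)(1)⁻¹ * ĝ(w)(1)` satisfies `ĥ(γ) = k₀ * ĝ(γ) * (γ • k₀)⁻¹`
for every `γ ∈ W`. This `k₀` need not lie in `G`, but since `ĝ` and `ĥ` agree at `1` on `K`
it is equivariant for `K`. Fixing a right transversal `T` of `W'`, the element of `G` that
agrees with `k₀` on `T` still works for `γ ∈ K`, because for `K` normal the right translation
by `γ` moves `u * ρ` (with `ρ ∈ T`) to `(u * ρ γ ρ⁻¹) * ρ`, and `ρ γ ρ⁻¹ ∈ K`.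
-/

section

variable {W G' : Type*} [Group W] [Group G']

def transitionAtOne (g h : W → W → G') (w : W) : G' :=
  (h w 1)⁻¹ * g w 1

theorem eq_transitionAtOne_mul_mul_inv {g h : W → W → G'}
    (hgCoc : ∀ v w x : W, g (v * w) x = g v x * g w (x * v))
    (hhCoc : ∀ v w x : W, h (v * w) x = h v x * h w (x * v)) (γ w : W) :
    h γ w = transitionAtOne g h w * g γ w * (transitionAtOne g h (w * γ))⁻¹ := by
  simp only [transitionAtOne, hgCoc w γ 1, hhCoc w γ 1, one_mul]
  group

theorem transitionAtOne_mul_eq_smul {W' : Subgroup W} [MulDistribMulAction W' G']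
    {g h : W → W → G'}
    (hgInd : ∀ v : W, ∀ (u : W') (w : W), g v (↑u * w) = u • g v w)
    (hgCoc : ∀ v w x : W, g (v * w) x = g v x * g w (x * v))
    (hhInd : ∀ v : W, ∀ (u : W') (w : W), h v (↑u * w) = u • h v w)
    (hhCoc : ∀ v w x : W, h (v * w) x = h v x * h w (x * v))
    {u : W'} (hu : g u 1 = h u 1) (w : W) :
    transitionAtOne g h (u * w) = u • transitionAtOne g h w := by
  have hg : g w u = u • g w 1 := by simpa using hgInd w u 1
  have hh : h w u = u • h w 1 := by simpa using hhInd w u 1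
  simp only [transitionAtOne, hgCoc u w 1, hhCoc u w 1, one_mul, hg, hh, hu, smul_mul',
    smul_inv']
  group

theorem Subgroup.exists_equivariant_eq_smul_of_normal_le {X : Type*} {W' K : Subgroup W}
    [MulAction W' X] (hKnorm : K.Normal) (hKW' : K ≤ W') (k₀ : W → X)
    (hk₀ : ∀ u : W', (u : W) ∈ K → ∀ w, k₀ (u * w) = u • k₀ w) :
    ∃ k : W → X, (∀ (u : W') (w : W), k (u * w) = u • k w) ∧
      ∀ w, ∃ (u : W') (ρ : W), w = u * ρ ∧ ∀ γ ∈ K, k (w * γ) = u • k₀ (ρ * γ) := by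
  obtain ⟨T, hT, -⟩ := W'.exists_isComplement_right 1
  refine ⟨fun w => ((hT.equiv w).1 : W') • k₀ (hT.equiv w).2, fun u w => ?_, fun w => ?_⟩
  · simp only [hT.equiv_mul_left, mul_smul]
  set u : W' := (hT.equiv w).1
  set ρ : W := ((hT.equiv w).2 : W)
  have hw : w = u * ρ := (hT.equiv_fst_mul_equiv_snd w).symm
  refine ⟨u, ρ, hw, fun γ hγ => ?_⟩
  set δ : W' := ⟨ρ * γ * ρ⁻¹, hKW' (hKnorm.conj_mem γ hγ ρ)⟩
  have hργ : ρ * γ = δ * ρ := by simp [δ]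
  have hwγ : w * γ = (u * δ * u⁻¹ : W') * w := by
    rw [hw, mul_assoc, hργ]
    simp only [Subgroup.coe_mul, Subgroup.coe_inv]
    group
  change ((hT.equiv (w * γ)).1 : W') • k₀ (hT.equiv (w * γ)).2 = u • k₀ (ρ * γ)
  rw [hwγ, hT.equiv_mul_left]
  change (u * δ * u⁻¹ * u) • k₀ ρ = u • k₀ (ρ * γ)
  rw [inv_mul_cancel_right, mul_smul, hργ, hk₀ δ (hKnorm.conj_mem γ hγ ρ)]

end

/-- Let `W' ≤ W`, `K` a normal subgroup of `W` contained in `W'`, `G'` a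
group with a `W'`-action, and `G = Ind_{W'}^{W} G'` with its translation `W`-action.  If
`ĝ, ĥ ∈ Z¹(W, G)` satisfy `ĝ γ 1 = ĥ γ 1` for all `γ ∈ K`, then the restrictions of `ĝ`
and `ĥ` to `K` are cohomologous: there is `k ∈ G` with `ĥ γ = k * ĝ γ * (γ • k)⁻¹` on `K`. -/
theorem stmt11 {W G' : Type*} [Group W] [Group G']
    (W' : Subgroup W) [MulDistribMulAction W' G'] (K : Subgroup W)
    (hKnorm : K.Normal) (hKW' : K ≤ W')
    (g h : W → W → G')
    (hgInd : ∀ v : W, ∀ (u : W') (w : W), g v (↑u * w) = u • g v w)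
    (hgCoc : ∀ v w x : W, g (v * w) x = g v x * g w (x * v))
    (hhInd : ∀ v : W, ∀ (u : W') (w : W), h v (↑u * w) = u • h v w)
    (hhCoc : ∀ v w x : W, h (v * w) x = h v x * h w (x * v))
    (hagree : ∀ γ ∈ K, g γ 1 = h γ 1) :
    ∃ k : W → G', (∀ (u : W') (w : W), k (↑u * w) = u • k w) ∧
      ∀ γ ∈ K, ∀ w, h γ w = k w * g γ w * (k (w * γ))⁻¹ := by
  obtain ⟨k, hkInd, hk⟩ := Subgroup.exists_equivariant_eq_smul_of_normal_le hKnorm hKW'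
    (transitionAtOne g h) fun u hu =>
      transitionAtOne_mul_eq_smul hgInd hgCoc hhInd hhCoc (hagree u hu)
  refine ⟨k, hkInd, fun γ hγ w => ?_⟩
  obtain ⟨u, ρ, rfl, hkρ⟩ := hk w
  have hkw : k (u * ρ) = u • transitionAtOne g h ρ := by simpa using hkρ 1 K.one_mem
  calc h γ (u * ρ) = u • h γ ρ := hhInd γ u ρ
    _ = u • (transitionAtOne g h ρ * g γ ρ * (transitionAtOne g h (ρ * γ))⁻¹) := by
      rw [eq_transitionAtOne_mul_mul_inv hgCoc hhCoc γ ρ]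
    _ = k (u * ρ) * g γ (u * ρ) * (k (u * ρ * γ))⁻¹ := by
      rw [hkw, hkρ γ hγ, hgInd, smul_mul', smul_mul', smul_inv']
end

section
/- Let W be a group, W' a subgroup of W, K a normal subgroup of W, and K' = K ∩ W'. Let G' be a group with a W'-action and G = Ind_{W'}^{W} G' with its translation W-action. Then for any two 1-cocycles ĝ, ĥ ∈ Z¹(W, G), the restrictions of ĝ and ĥ to K are cohomologous in Z¹(K, G) (K acting by restriction) if and only if their Shapiro images γ' ↦ ĝ(γ')(1) and γ' ↦ ĥ(γ')(1) are cohomologous in Z¹(K', G'). (This is the statement that the square formed by the restriction maps H¹(W,G) → H¹(K,G), H¹(W',G') → H¹(K',G') and the Shapiro maps H¹(W,G) → H¹(W',G'), H¹(K,G) → H¹(K',G') is cartesian.) -/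
/-- Let `W' ≤ W`, `K` a normal subgroup of `W`, `K' = K ⊓ W'`, `G'` a
group with a `W'`-action and `G = Ind_{W'}^{W} G'`.  For any two 1-cocycles
`ĝ, ĥ ∈ Z¹(W, G)`, their restrictions to `K` are cohomologous in `Z¹(K, G)` iff their
Shapiro images `γ' ↦ ĝ γ' 1` and `γ' ↦ ĥ γ' 1` are cohomologous in `Z¹(K', G')`
(the restriction/Shapiro square is cartesian). -/
theorem stmt12 {W G' : Type*} [Group W] [Group G']
    (W' : Subgroup W) [MulDistribMulAction W' G'] (K : Subgroup W)
    (hKnorm : K.Normal)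
    (g h : W → W → G')
    (hgInd : ∀ v : W, ∀ (u : W') (w : W), g v (↑u * w) = u • g v w)
    (hgCoc : ∀ v w x : W, g (v * w) x = g v x * g w (x * v))
    (hhInd : ∀ v : W, ∀ (u : W') (w : W), h v (↑u * w) = u • h v w)
    (hhCoc : ∀ v w x : W, h (v * w) x = h v x * h w (x * v)) :
    (∃ k : W → G', (∀ (u : W') (w : W), k (↑u * w) = u • k w) ∧
        ∀ γ ∈ K, ∀ w, h γ w = k w * g γ w * (k (w * γ))⁻¹) ↔
      (∃ k' : G', ∀ γ' : W, γ' ∈ K → ∀ (hW : γ' ∈ W'),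
        h γ' 1 = k' * g γ' 1 * (((⟨γ', hW⟩ : W') • k'))⁻¹) := by
  constructor
  · rintro ⟨k, hkInd, hk⟩
    refine ⟨k 1, fun γ hγK hW => ?_⟩
    have h1 := hk γ hγK 1
    rw [one_mul] at h1
    have h2 : k γ = (⟨γ, hW⟩ : W') • k 1 := by
      have := hkInd ⟨γ, hW⟩ 1
      rwa [mul_one] at this
    rw [h1, h2]
  · rintro ⟨k', hk'⟩
    -- basic facts
    have hg1 : ∀ x, g 1 x = 1 := by
      intro x
      have := hgCoc 1 1 x
      rw [one_mul, mul_one] at this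
      exact (left_eq_mul.mp this)
    have hh1 : ∀ x, h 1 x = 1 := by
      intro x
      have := hhCoc 1 1 x
      rw [one_mul, mul_one] at this
      exact (left_eq_mul.mp this)
    have hgmul : ∀ (u : W') (w : W), g (↑u * w) 1 = g ↑u 1 * u • g w 1 := by
      intro u w
      have h1 := hgCoc ↑u w 1
      rw [one_mul] at h1
      have h2 : g w ↑u = u • g w 1 := by simpa using hgInd w u 1
      rw [h1, h2]
    have hhmul : ∀ (u : W') (w : W), h (↑u * w) 1 = h ↑u 1 * u • h w 1 := by
      intro u w
      have h1 := hhCoc ↑u w 1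
      rw [one_mul] at h1
      have h2 : h w ↑u = u • h w 1 := by simpa using hhInd w u 1
      rw [h1, h2]
    let F : W' → G' := fun u => h ↑u 1 * u • k' * (g ↑u 1)⁻¹
    have hFdef : ∀ u : W', F u = h ↑u 1 * u • k' * (g ↑u 1)⁻¹ := fun _ => rfl
    have hFmul : ∀ u₀ u : W', F (u₀ * u) = h ↑u₀ 1 * u₀ • F u * (g ↑u₀ 1)⁻¹ := by
      intro u₀ u
      rw [hFdef, hFdef, Subgroup.coe_mul, hhmul u₀ ↑u, hgmul u₀ ↑u, mul_smul,
        mul_inv_rev, smul_mul', smul_mul', smul_inv']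
      group
    have hFK : ∀ (u t : W'), (↑t : W) ∈ K → F (u * t) = F u := by
      intro u t ht
      have hFt : F t = k' := by
        have h1 := hk' ↑t ht t.2
        have h2 : (⟨↑t, t.2⟩ : W') = t := rfl
        rw [h2] at h1
        rw [hFdef, h1]
        group
      rw [hFmul, hFt, hFdef]
    -- the double coset setoid
    let S : Setoid W := {
      r := fun a b => ∃ u : W', ∃ γ ∈ K, b = ↑u * a * γ
      iseqv := by
        constructor
        · intro a; exact ⟨1, 1, K.one_mem, by simp⟩
        · rintro a b ⟨u, γ, hγ, rfl⟩
          exact ⟨u⁻¹, γ⁻¹, K.inv_mem hγ, by simp [mul_assoc]⟩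
        · rintro a b c ⟨u, γ, hγ, rfl⟩ ⟨u₂, γ₂, hγ₂, rfl⟩
          exact ⟨u₂ * u, γ * γ₂, K.mul_mem hγ hγ₂, by simp [mul_assoc]⟩
    }
    let rep : W → W := fun w => (Quotient.mk S w).out
    have hrep_eq : ∀ (w : W) (u : W') (γ : W), γ ∈ K → rep (↑u * w * γ) = rep w := by
      intro w u γ hγ
      have : Quotient.mk S (↑u * w * γ) = Quotient.mk S w :=
        (Quotient.sound (⟨u, γ, hγ, rfl⟩ : S.r w (↑u * w * γ))).symm
      show (Quotient.mk S (↑u * w * γ)).out = (Quotient.mk S w).out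
      rw [this]
    have hrep_rel : ∀ w : W, ∃ u : W', ∃ γ ∈ K, w = ↑u * rep w * γ :=
      fun w => Quotient.exact ((Quotient.mk S w).out_eq)
    let uu : W → W' := fun w => (hrep_rel w).choose
    have huu : ∀ w : W, ∃ γ ∈ K, w = ↑(uu w) * rep w * γ :=
      fun w => (hrep_rel w).choose_spec
    -- the key lemma
    have hc : ∀ (u₀ : W') (w γ : W), γ ∈ K →
        F (uu (↑u₀ * w * γ)) = h ↑u₀ 1 * u₀ • F (uu w) * (g ↑u₀ 1)⁻¹ := by
      intro u₀ w γ hγ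
      obtain ⟨γ₁, hγ₁, hw1⟩ := huu w
      obtain ⟨γ₂, hγ₂, hw2⟩ := huu (↑u₀ * w * γ)
      rw [hrep_eq w u₀ γ hγ] at hw2
      set r := rep w with hr
      set u₂ := uu (↑u₀ * w * γ) with hu₂
      set u₁ := uu w with hu₁
      have key : (↑u₂ : W) = ↑u₀ * ↑u₁ * (r * (γ₁ * γ * γ₂⁻¹) * r⁻¹) := by
        have h3 : (↑u₂ : W) * r * γ₂ = ↑u₀ * (↑u₁ * r * γ₁) * γ := by
          rw [← hw1, ← hw2]
        calc (↑u₂ : W) = (↑u₂ * r * γ₂) * γ₂⁻¹ * r⁻¹ := by group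
          _ = (↑u₀ * (↑u₁ * r * γ₁) * γ) * γ₂⁻¹ * r⁻¹ := by rw [h3]
          _ = ↑u₀ * ↑u₁ * (r * (γ₁ * γ * γ₂⁻¹) * r⁻¹) := by group
      set t : W' := (u₀ * u₁)⁻¹ * u₂ with htdef
      have htK : (↑t : W) ∈ K := by
        have : (↑t : W) = r * (γ₁ * γ * γ₂⁻¹) * r⁻¹ := by
          rw [htdef]
          push_cast
          rw [key]
          group
        rw [this]
        exact hKnorm.conj_mem _ (K.mul_mem (K.mul_mem hγ₁ hγ) (K.inv_mem hγ₂)) r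
      have hu₂eq : u₂ = (u₀ * u₁) * t := by rw [htdef]; group
      rw [hu₂eq, hFK _ _ htK, hFmul]
    have hcK : ∀ (w γ : W), γ ∈ K → F (uu (w * γ)) = F (uu w) := by
      intro w γ hγ
      have := hc 1 w γ hγ
      simpa [hg1, hh1] using this
    have hcW : ∀ (u : W') (w : W),
        F (uu (↑u * w)) = h ↑u 1 * u • F (uu w) * (g ↑u 1)⁻¹ := by
      intro u w
      have := hc u w 1 K.one_mem
      simpa using this
    refine ⟨fun w => (h w 1)⁻¹ * F (uu w) * g w 1, ?_, ?_⟩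
    · intro u w
      show (h (↑u * w) 1)⁻¹ * F (uu (↑u * w)) * g (↑u * w) 1 =
        u • ((h w 1)⁻¹ * F (uu w) * g w 1)
      rw [hhmul u w, hgmul u w, hcW u w]
      simp only [hFdef, smul_mul', smul_inv', mul_inv_rev]
      group
    · intro γ hγ w
      have hgw : g γ w = (g w 1)⁻¹ * g (w * γ) 1 := by
        have h1 := hgCoc w γ 1
        rw [one_mul] at h1
        rw [h1]; group
      have hhw : h γ w = (h w 1)⁻¹ * h (w * γ) 1 := by
        have h1 := hhCoc w γ 1
        rw [one_mul] at h1
        rw [h1]; group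
      show h γ w = ((h w 1)⁻¹ * F (uu w) * g w 1) * g γ w *
        ((h (w * γ) 1)⁻¹ * F (uu (w * γ)) * g (w * γ) 1)⁻¹
      rw [hcK w γ hγ, hgw, hhw]
      group
end

section
/- Let W be a group, W' a subgroup of W, G' a group with a W'-action, and G = Ind_{W'}^{W} G' with its translation W-action. Let φ ∈ Z¹(W, G) be a 1-cocycle and define φ' : W' → G' by φ'(w') = φ(w')(1), which is a 1-cocycle in Z¹(W', G'). Equip G with the twisted W-action α_φ(w)(g) = φ(w) * (w • g) * φ(w)⁻¹ and G' with the twisted W'-action α_{φ'}(w')(g') = φ'(w') * (w' • g') * φ'(w')⁻¹. Then the map g ↦ g̃, where g̃(w) = φ(w)(1) * g(w) * (φ(w)(1))⁻¹, is a group isomorphism from G onto the induced group Ind_{W'}^{W}(G') formed with respect to the twisted W'-action α_{φ'}, and it is W-equivariant: for every v ∈ W and g ∈ G, the image of α_φ(v)(g) equals the translate v • g̃ in the target. -/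
/-- Let `W' ≤ W`, `G'` a group with a `W'`-action, `G = Ind_{W'}^{W} G'`
with the translation `W`-action, `φ ∈ Z¹(W, G)` and `φ' ∈ Z¹(W', G')`, `φ' u = φ u 1`.
Then: `φ'` is a 1-cocycle; the map `g ↦ g̃`, `g̃ w = φ w 1 * g w * (φ w 1)⁻¹`, is
multiplicative; it maps the induced group bijectively onto the induced group formed with
respect to the twisted `W'`-action `α_{φ'}`; and it is `W`-equivariant for the twisted
`W`-action `α_φ` on the source and the translation action on the target. -/
theorem stmt13 {W G' : Type*} [Group W] [Group G']
    (W' : Subgroup W) [MulDistribMulAction W' G']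
    (φ : W → W → G')
    (hInd : ∀ v : W, ∀ (u : W') (w : W), φ v (↑u * w) = u • φ v w)
    (hCoc : ∀ v w x : W, φ (v * w) x = φ v x * φ w (x * v)) :
    (∀ u u' : W', φ (↑u * ↑u') 1 = φ (↑u) 1 * (u • φ (↑u') 1)) ∧
    (∀ g h : W → G', ∀ w : W,
      φ w 1 * (g w * h w) * (φ w 1)⁻¹ =
        (φ w 1 * g w * (φ w 1)⁻¹) * (φ w 1 * h w * (φ w 1)⁻¹)) ∧
    Set.BijOn (fun (g : W → G') => fun w => φ w 1 * g w * (φ w 1)⁻¹)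
      {g | ∀ (u : W') (w : W), g (↑u * w) = u • g w}
      {g | ∀ (u : W') (w : W),
        g (↑u * w) = φ (↑u) 1 * (u • g w) * (φ (↑u) 1)⁻¹} ∧
    (∀ (g : W → G') (v w : W),
      φ w 1 * (φ v w * g (w * v) * (φ v w)⁻¹) * (φ w 1)⁻¹ =
        φ (w * v) 1 * g (w * v) * (φ (w * v) 1)⁻¹) := by
  have key : ∀ (u : W') (w : W), φ (↑u * w) 1 = φ (↑u) 1 * (u • φ w 1) := by
    intro u w
    have h1 := hCoc (↑u) w 1
    have h2 := hInd w u 1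
    rw [h1, one_mul, ← mul_one (u : W), h2, mul_one]
  refine ⟨fun u u' => key u u', fun g h w => by group, ⟨?_, ?_, ?_⟩, ?_⟩
  · intro g hg u w
    simp only [Set.mem_setOf_eq] at hg ⊢
    rw [key u w, hg u w, smul_mul', smul_mul', smul_inv']
    group
  · intro g hg h hh heq
    funext w
    have := congrFun heq w
    simp only at this
    exact mul_left_cancel (mul_right_cancel this)
  · intro h hh
    refine ⟨fun w => (φ w 1)⁻¹ * h w * φ w 1, ?_, ?_⟩
    · intro u w
      simp only [Set.mem_setOf_eq] at hh
      simp only []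
      rw [key u w, hh u w, smul_mul', smul_mul', smul_inv']
      group
    · funext w; simp; group
  · intro g v w
    have h1 : φ (w * v) 1 = φ w 1 * φ v w := by rw [hCoc w v 1, one_mul]
    rw [h1]; group
end

section
/- Let W be a group, W' a subgroup of W, K a normal subgroup of W, K' = K ∩ W'. Let G' be a group with a W'-action, G = Ind_{W'}^{W} G' with the translation W-action, φ ∈ Z¹(W, G), and φ' ∈ Z¹(W', G') defined by φ'(w') = φ(w')(1). Let C = {g ∈ G : α_φ(k)(g) = g for all k ∈ K} and C' = {g' ∈ G' : α_{φ'}(k')(g') = g' for all k' ∈ K'}. Then the isomorphism g ↦ g̃, g̃(w) = φ(w)(1) * g(w) * (φ(w)(1))⁻¹, from G onto Ind_{W'}^{W}(G') (formed for the twisted W'-action α_{φ'}) maps C bijectively onto the subgroup of functions g̃ satisfying g̃(γ * w) = g̃(w) for all γ ∈ K and w ∈ W; moreover every such K-invariant function takes all its values in C'. (Thus C is identified with the induction from W'/K' to W/K of C'.) -/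
/-- With `W' ≤ W`, `K` normal in `W`, `K' = K ⊓ W'`, `G = Ind_{W'}^{W} G'`,
`φ ∈ Z¹(W, G)` and `φ' u = φ u 1`: the isomorphism `g ↦ g̃`, `g̃ w = φ w 1 * g w * (φ w 1)⁻¹`,
maps `C = {g ∈ G : α_φ(k)(g) = g ∀ k ∈ K}` bijectively onto the set of elements of the
twisted induced group (for `α_{φ'}`) which are invariant under left translation by `K`;
moreover every such `K`-invariant function takes all its values in
`C' = {g' ∈ G' : α_{φ'}(k')(g') = g' ∀ k' ∈ K'}`. -/
theorem stmt14 {W G' : Type*} [Group W] [Group G']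
    (W' : Subgroup W) [MulDistribMulAction W' G'] (K : Subgroup W) (hK : K.Normal)
    (φ : W → W → G')
    (hInd : ∀ v : W, ∀ (u : W') (w : W), φ v (↑u * w) = u • φ v w)
    (hCoc : ∀ v w x : W, φ (v * w) x = φ v x * φ w (x * v)) :
    Set.BijOn (fun (g : W → G') => fun w => φ w 1 * g w * (φ w 1)⁻¹)
      {g | (∀ (u : W') (w : W), g (↑u * w) = u • g w) ∧
        ∀ γ ∈ K, ∀ w, φ γ w * g (w * γ) * (φ γ w)⁻¹ = g w}
      {g | (∀ (u : W') (w : W),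
          g (↑u * w) = φ (↑u) 1 * (u • g w) * (φ (↑u) 1)⁻¹) ∧
        ∀ γ ∈ K, ∀ w, g (γ * w) = g w} ∧
    ∀ g : W → G',
      (∀ (u : W') (w : W), g (↑u * w) = φ (↑u) 1 * (u • g w) * (φ (↑u) 1)⁻¹) →
      (∀ γ ∈ K, ∀ w, g (γ * w) = g w) →
      ∀ (w γ : W), γ ∈ K → ∀ (hW : γ ∈ W'),
        φ γ 1 * (((⟨γ, hW⟩ : W') • g w)) * (φ γ 1)⁻¹ = g w := by
  have key : ∀ v w : W, φ v (1 * v) = (φ v 1)⁻¹ * φ (v * v) 1 := by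
    intro v w
    have := hCoc v v 1
    group at this ⊢
    rw [this]; group
  constructor
  · refine ⟨?_, ?_, ?_⟩
    · rintro g ⟨hg1, hg2⟩
      constructor
      · intro u w
        have h1 : φ (↑u * w) 1 = φ (↑u) 1 * φ w (↑u) := by
          have := hCoc (↑u) w 1; simpa using this
        have h2 : φ w (↑u : W) = u • φ w 1 := by
          have := hInd w u 1; simpa using this
        simp only [h1, h2, hg1, mul_inv_rev, smul_mul', smul_inv']
        group
      · intro γ hγ w
        have hδ : w⁻¹ * γ * w ∈ K := hK.conj_mem' γ hγ w
        have hrw : γ * w = w * (w⁻¹ * γ * w) := by group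
        have h1 : φ (w * (w⁻¹ * γ * w)) 1 = φ w 1 * φ (w⁻¹ * γ * w) w := by
          have := hCoc w (w⁻¹ * γ * w) 1; simpa using this
        have h2 := hg2 _ hδ w
        simp only [hrw, h1]
        calc φ w 1 * φ (w⁻¹ * γ * w) w * g (w * (w⁻¹ * γ * w)) *
              (φ w 1 * φ (w⁻¹ * γ * w) w)⁻¹
            = φ w 1 * (φ (w⁻¹ * γ * w) w * g (w * (w⁻¹ * γ * w)) *
              (φ (w⁻¹ * γ * w) w)⁻¹) * (φ w 1)⁻¹ := by group
          _ = φ w 1 * g w * (φ w 1)⁻¹ := by rw [h2]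
    · rintro g₁ - g₂ - h
      funext w
      have := congrFun h w
      simp only at this
      exact mul_left_cancel (mul_right_cancel this)
    · rintro h ⟨hh1, hh2⟩
      refine ⟨fun w => (φ w 1)⁻¹ * h w * φ w 1, ⟨?_, ?_⟩, ?_⟩
      · intro u w
        have h1 : φ (↑u * w) 1 = φ (↑u) 1 * φ w (↑u) := by
          have := hCoc (↑u) w 1; simpa using this
        have h2 : φ w (↑u : W) = u • φ w 1 := by
          have := hInd w u 1; simpa using this
        simp only [h1, h2, hh1, mul_inv_rev, smul_mul', smul_inv']
        group
      · intro γ hγ w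
        have hδ : w * γ * w⁻¹ ∈ K := hK.conj_mem γ hγ w
        have h1 : φ (w * γ) 1 = φ w 1 * φ γ w := by
          have := hCoc w γ 1; simpa using this
        have h2 : h (w * γ) = h w := by
          have := hh2 _ hδ w
          rwa [show w * γ * w⁻¹ * w = w * γ by group] at this
        simp only [h1, h2, mul_inv_rev]
        group
      · funext w
        simp only
        group
  · intro g hg1 hg2 w γ hγK hW
    have := hg1 ⟨γ, hW⟩ w
    rw [hg2 γ hγK w] at this
    exact this.symm
end

section
/- Let E be a group, C a normal subgroup of E, and p : E → Q a surjective group homomorphism with kernel C. Let α : Q → Aut(C) be a group homomorphism such that for every e ∈ E there exists c₀ ∈ C with e * c * e⁻¹ = c₀ * α(p(e))(c) * c₀⁻¹ for all c ∈ C (α lifts the outer action of the extension). Define Ñ := {e ∈ E : e * c * e⁻¹ = α(p(e))(c) for all c ∈ C}. Then: (i) Ñ is a subgroup of E, Ñ ∩ C equals the center Z(C) of C, and p maps Ñ onto Q; (ii) there exists a group isomorphism θ from the semidirect product C ⋊_α Q onto E satisfying θ(c, 1) = c for all c ∈ C and p(θ(c, q)) = q for all (c, q), if and only if the restriction p|_Ñ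 : Ñ → Q admits a group-homomorphic section. -/
/-- Let `p : E → Q` be a surjective group homomorphism with kernel `C`,
and `α : Q → Aut(C)` a homomorphism lifting the outer action of the extension (every
conjugation `e * · * e⁻¹` on `C` agrees with `α (p e)` up to an inner automorphism of `C`).
Let `Ñ = {e ∈ E : e * c * e⁻¹ = α (p e) c for all c ∈ C}`.  Then: (i) `Ñ` is a subgroup of
`E`, `Ñ ∩ C = Z(C)`, and `p` maps `Ñ` onto `Q`; (ii) there is a group isomorphism
`θ : C ⋊[α] Q ≃* E` with `θ (c, 1) = c` and `p (θ (c, q)) = q` iff `p|_Ñ : Ñ → Q` admits a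
group-homomorphic section. -/
theorem stmt15 {E Q : Type*} [Group E] [Group Q]
    (p : E →* Q) (hp : Function.Surjective p)
    (α : Q →* MulAut p.ker)
    (hα : ∀ e : E, ∃ c₀ : p.ker, ∀ c : p.ker,
      e * ↑c * e⁻¹ = ↑c₀ * ↑(α (p e) c) * (↑c₀)⁻¹) :
    (∃ N : Subgroup E,
      (N : Set E) = {e : E | ∀ c : p.ker, e * (c : E) * e⁻¹ = ((α (p e) c : p.ker) : E)}) ∧
    ({e : E | (∀ c : p.ker, e * (c : E) * e⁻¹ = ((α (p e) c : p.ker) : E)) ∧ e ∈ p.ker} =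
      {z : E | z ∈ p.ker ∧ ∀ c : p.ker, z * (c : E) = (c : E) * z}) ∧
    (∀ q : Q, ∃ e : E,
      (∀ c : p.ker, e * (c : E) * e⁻¹ = ((α (p e) c : p.ker) : E)) ∧ p e = q) ∧
    ((∃ θ : p.ker ⋊[α] Q ≃* E,
        (∀ c : p.ker, θ ⟨c, 1⟩ = ↑c) ∧
        ∀ (c : p.ker) (q : Q), p (θ ⟨c, q⟩) = q) ↔
      ∃ s : Q →* E, (∀ q, ∀ c : p.ker, s q * ↑c * (s q)⁻¹ = ↑(α (p (s q)) c)) ∧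
        ∀ q, p (s q) = q) := by
  have hmul : ∀ a b : E, (∀ c : p.ker, a * (c : E) * a⁻¹ = ((α (p a) c : p.ker) : E)) →
      (∀ c : p.ker, b * (c : E) * b⁻¹ = ((α (p b) c : p.ker) : E)) →
      ∀ c : p.ker, (a * b) * (c : E) * (a * b)⁻¹ = ((α (p (a * b)) c : p.ker) : E) := by
    intro a b ha hb c
    have h1 := hb c
    have h2 := ha (α (p b) c)
    calc a * b * ↑c * (a * b)⁻¹ = a * (b * ↑c * b⁻¹) * a⁻¹ := by group
      _ = a * ↑(α (p b) c) * a⁻¹ := by rw [h1]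
      _ = ↑(α (p a) (α (p b) c)) := h2
      _ = ↑(α (p (a * b)) c) := by rw [map_mul p, map_mul α]; rfl
  have hinv : ∀ a : E, (∀ c : p.ker, a * (c : E) * a⁻¹ = ((α (p a) c : p.ker) : E)) →
      ∀ c : p.ker, a⁻¹ * (c : E) * (a⁻¹)⁻¹ = ((α (p a⁻¹) c : p.ker) : E) := by
    intro a ha c
    have h := ha ((α (p a))⁻¹ c)
    have h2 : (↑(α (p a) ((α (p a))⁻¹ c)) : E) = ↑c := by
      congr 1
      exact MulAut.apply_inv_self _ _ _
    rw [h2] at h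
    have h3 : (↑(α (p a⁻¹) c) : E) = ↑((α (p a))⁻¹ c) := by
      rw [map_inv p, map_inv α]
    rw [h3, ← h]
    group
  refine ⟨?_, ?_, ?_, ?_⟩
  · -- subgroup
    refine ⟨{ carrier := {e : E | ∀ c : p.ker, e * (c : E) * e⁻¹ = ((α (p e) c : p.ker) : E)}
              one_mem' := fun c => by simp
              mul_mem' := fun {a b} ha hb => hmul a b ha hb
              inv_mem' := fun {a} ha => hinv a ha }, rfl⟩
  · -- intersection with kernel
    ext z
    constructor
    · rintro ⟨hN, hker⟩
      refine ⟨hker, fun c => ?_⟩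
      have h := hN c
      rw [MonoidHom.mem_ker.mp hker, map_one α] at h
      simp only [MulAut.one_apply] at h
      calc z * ↑c = z * ↑c * z⁻¹ * z := by group
        _ = ↑c * z := by rw [h]
    · rintro ⟨hker, hcomm⟩
      refine ⟨fun c => ?_, hker⟩
      rw [MonoidHom.mem_ker.mp hker, map_one α]
      simp only [MulAut.one_apply]
      rw [hcomm c]; group
  · -- surjectivity onto Q
    intro q
    obtain ⟨e, he⟩ := hp q
    obtain ⟨c₀, hc₀⟩ := hα e
    have hk : p ↑c₀ = 1 := MonoidHom.mem_ker.mp c₀.2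
    refine ⟨(↑c₀)⁻¹ * e, fun c => ?_, ?_⟩
    · have hpe : p ((↑c₀)⁻¹ * e) = p e := by simp [hk]
      rw [hpe]
      have h := hc₀ c
      calc (↑c₀)⁻¹ * e * ↑c * ((↑c₀)⁻¹ * e)⁻¹
          = (↑c₀)⁻¹ * (e * ↑c * e⁻¹) * ↑c₀ := by group
        _ = (↑c₀)⁻¹ * (↑c₀ * ↑(α (p e) c) * (↑c₀)⁻¹) * ↑c₀ := by rw [h]
        _ = ↑(α (p e) c) := by group
    · simp [hk, he]
  · -- the iff
    constructor
    · rintro ⟨θ, hθ1, hθ2⟩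
      refine ⟨θ.toMonoidHom.comp (SemidirectProduct.inr), fun q c => ?_, fun q => ?_⟩
      · simp only [MonoidHom.comp_apply, MulEquiv.coe_toMonoidHom]
        have hps : p (θ (SemidirectProduct.inr q)) = q := hθ2 1 q
        rw [hps]
        have hc : (c : E) = θ (SemidirectProduct.inl c) := (hθ1 c).symm
        rw [hc, ← map_mul, ← map_inv, ← map_mul]
        rw [show (SemidirectProduct.inr q * SemidirectProduct.inl c * (SemidirectProduct.inr q)⁻¹ :
            p.ker ⋊[α] Q) = SemidirectProduct.inl (α q c) from by
          rw [SemidirectProduct.inl_aut, map_inv]]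
        exact hθ1 (α q c)
      · simp only [MonoidHom.comp_apply, MulEquiv.coe_toMonoidHom]
        exact hθ2 1 q
    · rintro ⟨s, hsN, hsp⟩
      have hcompat : ∀ q : Q, ∀ c : p.ker, (↑(α q c) : E) = s q * ↑c * (s q)⁻¹ := by
        intro q c
        rw [hsN q c, hsp q]
      set f : p.ker ⋊[α] Q →* E := SemidirectProduct.lift p.ker.subtype s (by
        intro q
        ext c
        simp only [MonoidHom.comp_apply, Subgroup.coe_subtype, MulEquiv.coe_toMonoidHom,
          MulAut.conj_apply]
        exact hcompat q c) with hf
      have hfmk : ∀ (c : p.ker) (q : Q), f ⟨c, q⟩ = ↑c * s q := by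
        intro c q
        rw [SemidirectProduct.mk_eq_inl_mul_inr q c, map_mul]
        simp [hf]
      have hpf : ∀ x : p.ker ⋊[α] Q, p (f x) = x.right := by
        intro x
        obtain ⟨c, q⟩ := x
        rw [hfmk]
        have hc : p ↑c = 1 := MonoidHom.mem_ker.mp c.2
        simp [hc, hsp]
      have hbij : Function.Bijective f := by
        constructor
        · intro x y hxy
          have hr : x.right = y.right := by rw [← hpf x, ← hpf y, hxy]
          obtain ⟨c, q⟩ := x
          obtain ⟨c', q'⟩ := y
          simp only at hr
          subst hr
          rw [hfmk, hfmk] at hxy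
          have h1 : (c : E) = ↑c' := mul_right_cancel hxy
          have h2 : c = c' := Subtype.ext h1
          subst h2
          rfl
        · intro e
          have hker : e * (s (p e))⁻¹ ∈ p.ker := by
            rw [MonoidHom.mem_ker]
            simp [hsp]
          refine ⟨⟨⟨e * (s (p e))⁻¹, hker⟩, p e⟩, ?_⟩
          rw [hfmk]
          simp
      refine ⟨MulEquiv.ofBijective f hbij, fun c => ?_, fun c q => ?_⟩
      · show f ⟨c, 1⟩ = ↑c
        rw [hfmk]; simp
      · show p (f ⟨c, q⟩) = q
        rw [hpf]
end

section
/- Let E be a group, C a normal subgroup of E, and p : E → Q a surjective group homomorphism with kernel C, where Q is an infinite cyclic group (Q ≅ ℤ). Let α : Q → Aut(C) be a group homomorphism such that for every e ∈ E there exists c₀ ∈ C with e * c * e⁻¹ = c₀ * α(p(e))(c) * c₀⁻¹ for all c ∈ C. Then there exists a group isomorphism θ from the semidirect product C ⋊_α Q onto E satisfying θ(c, 1) = c for all c ∈ C and p(θ(c, q)) = q for all (c, q). -/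
/-!
Since `Q ≅ ℤ` is free on a generator `g`, it suffices to find `e₀ ∈ p⁻¹(g)` whose conjugation
action on `C` is exactly `α g`: then `q ↦ e₀ ^ n` (for `q = g ^ n`) is a splitting of `p` whose
conjugation action agrees with `α` on `g`, hence everywhere, and a split extension is the
semidirect product for the conjugation action of its splitting. Such an `e₀` is `c₀⁻¹ e` for any
lift `e` of `g`, with `c₀` the element of `C` provided by the hypothesis on `e`.
-/

open Multiplicative

theorem MonoidHom.ext_of_mulEquiv_multiplicativeInt {Q M : Type*} [Group Q] [Monoid M]
    (φ : Q ≃* Multiplicative ℤ) {f g : Q →* M}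
    (h : f (φ.symm (ofAdd 1)) = g (φ.symm (ofAdd 1))) : f = g := by
  have := MonoidHom.ext_mint (f := f.comp φ.symm.toMonoidHom) (g := g.comp φ.symm.toMonoidHom) h
  ext q
  simpa using DFunLike.congr_fun this (φ q)

theorem Subgroup.conj_inv_mul_eq_of_conj_eq {E : Type*} [Group E] {N : Subgroup E} {e : E}
    {c₀ : N} {a : MulAut N} (h : ∀ c : N, e * c * e⁻¹ = c₀ * a c * (c₀ : E)⁻¹) (c : N) :
    ((c₀ : E)⁻¹ * e) * c * ((c₀ : E)⁻¹ * e)⁻¹ = a c := by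
  calc ((c₀ : E)⁻¹ * e) * c * ((c₀ : E)⁻¹ * e)⁻¹ = (c₀ : E)⁻¹ * (e * c * e⁻¹) * c₀ := by group
    _ = a c := by rw [h]; group

namespace MonoidHom

variable {E Q : Type*} [Group E] [Group Q]

def kerGroupExtension (p : E →* Q) (hp : Function.Surjective p) : GroupExtension p.ker E Q where
  inl := p.ker.subtype
  rightHom := p
  inl_injective := Subtype.val_injective
  range_inl_eq_ker_rightHom := p.ker.range_subtype
  rightHom_surjective := hp

theorem exists_semidirectProduct_mulEquiv_of_section (p : E →* Q) (α : Q →* MulAut p.ker)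
    (s : Q →* E) (hs : ∀ q, p (s q) = q) (hconj : ∀ q (c : p.ker), s q * c * (s q)⁻¹ = α q c) :
    ∃ θ : p.ker ⋊[α] Q ≃* E, ∀ c q, θ ⟨c, q⟩ = c * s q := by
  let σ : (p.kerGroupExtension (Function.RightInverse.surjective hs)).Splitting := ⟨s, hs⟩
  obtain rfl : σ.conjAct = α := by
    ext q c
    exact ((p.kerGroupExtension _).inl_conjAct_comm).trans (hconj q c)
  exact ⟨σ.semidirectProductMulEquiv, fun _ _ ↦ rfl⟩

theorem exists_section_conj_eq_of_mulEquiv_multiplicativeInt {p : E →* Q}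
    {α : Q →* MulAut p.ker} (φ : Q ≃* Multiplicative ℤ) {e₀ : E}
    (he₀ : p e₀ = φ.symm (ofAdd 1))
    (hconj : ∀ c : p.ker, e₀ * c * e₀⁻¹ = α (φ.symm (ofAdd 1)) c) :
    ∃ s : Q →* E, (∀ q, p (s q) = q) ∧ ∀ q (c : p.ker), s q * c * (s q)⁻¹ = α q c := by
  let s : Q →* E := (zpowersHom E e₀).comp φ.toMonoidHom
  have hs_gen : s (φ.symm (ofAdd 1)) = e₀ := by simp [s]
  have hps : p.comp s = MonoidHom.id Q :=
    ext_of_mulEquiv_multiplicativeInt φ (by simp [hs_gen, he₀])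
  have hconj_s : MulAut.conjNormal.comp s = α :=
    ext_of_mulEquiv_multiplicativeInt φ <| MulEquiv.ext fun c ↦ Subtype.ext <| by
      simp [hs_gen, hconj]
  refine ⟨s, fun q ↦ DFunLike.congr_fun hps q, fun q c ↦ ?_⟩
  rw [← hconj_s]
  simp

end MonoidHom

/-- Let `p : E → Q` be a surjective group homomorphism with kernel `C`,
where `Q` is infinite cyclic (`Q ≃ ℤ`), and `α : Q → Aut(C)` a homomorphism lifting the
outer action of the extension.  Then there is a group isomorphism `θ : C ⋊[α] Q ≃* E`
with `θ (c, 1) = c` for all `c ∈ C` and `p (θ (c, q)) = q` for all `(c, q)`. -/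
theorem stmt16 {E Q : Type*} [Group E] [Group Q]
    (p : E →* Q) (hp : Function.Surjective p)
    (hQ : Nonempty (Q ≃* Multiplicative ℤ))
    (α : Q →* MulAut p.ker)
    (hα : ∀ e : E, ∃ c₀ : p.ker, ∀ c : p.ker,
      e * ↑c * e⁻¹ = ↑c₀ * ↑(α (p e) c) * (↑c₀)⁻¹) :
    ∃ θ : p.ker ⋊[α] Q ≃* E,
      (∀ c : p.ker, θ ⟨c, 1⟩ = ↑c) ∧
      ∀ (c : p.ker) (q : Q), p (θ ⟨c, q⟩) = q := by
  obtain ⟨φ⟩ := hQ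
  obtain ⟨e, he⟩ := hp (φ.symm (ofAdd 1))
  obtain ⟨c₀, hc₀⟩ := hα e
  have hpe₀ : p ((c₀ : E)⁻¹ * e) = φ.symm (ofAdd 1) := by simp [he, p.mem_ker.mp c₀.2]
  obtain ⟨s, hs, hconj⟩ := p.exists_section_conj_eq_of_mulEquiv_multiplicativeInt φ hpe₀
    (he ▸ Subgroup.conj_inv_mul_eq_of_conj_eq hc₀)
  obtain ⟨θ, hθ⟩ := p.exists_semidirectProduct_mulEquiv_of_section α s hs hconj
  exact ⟨θ, fun c ↦ by simp [hθ], fun c q ↦ by simp [hθ, hs, p.mem_ker.mp c.2]⟩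
end

section
/- Let M be a topological group whose topology is T1, and let G be a subgroup of M whose underlying subspace is connected. Let x ∈ M and suppose that the set of commutators {x * g * x⁻¹ * g⁻¹ : g ∈ G} is finite. Then x commutes with every element of G: x * g = g * x for all g ∈ G. -/
/-!
The map `g ↦ ⁅x, g⁆` is continuous, so it sends the connected set `G` onto a connected set; that
set is finite, hence discrete in a T1 space, so the map is constant on `G`, equal to its value
`⁅x, 1⁆ = 1` at the identity.
-/

open scoped commutatorElement

theorem IsPreconnected.commute_of_finite_commutators {M : Type*} [Group M] [TopologicalSpace M]
    [IsTopologicalGroup M] [T1Space M] {S : Set M} (hS : IsPreconnected S) (h1 : (1 : M) ∈ S)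
    {x : M} (hfin : ((⁅x, ·⁆) '' S).Finite) {g : M} (hg : g ∈ S) : Commute x g := by
  have hcont : Continuous fun g : M ↦ ⁅x, g⁆ := by
    simp only [commutatorElement_def]
    fun_prop
  have hconst : ⁅x, g⁆ = ⁅x, 1⁆ :=
    hS.constant_of_mapsTo hfin.isDiscrete hcont.continuousOn (Set.mapsTo_image _ S) hg h1
  rwa [commutatorElement_one_right, commutatorElement_eq_one_iff_commute] at hconst

/-- Let `M` be a T1 topological group, `G ≤ M` a subgroup whose
underlying subspace is connected, and `x ∈ M`.  If the set of commutators
`{x * g * x⁻¹ * g⁻¹ : g ∈ G}` is finite, then `x` commutes with every element of `G`. -/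
theorem stmt18 {M : Type*} [Group M] [TopologicalSpace M] [IsTopologicalGroup M]
    [T1Space M] (G : Subgroup M) (hG : IsConnected (G : Set M)) (x : M)
    (hfin : Set.Finite {y : M | ∃ g ∈ G, y = x * g * x⁻¹ * g⁻¹}) :
    ∀ g ∈ G, x * g = g * x := by
  have hcomm : ((⁅x, ·⁆) '' (G : Set M)).Finite :=
    hfin.subset <| by
      rintro _ ⟨g, hg, rfl⟩
      exact ⟨g, hg, commutatorElement_def x g⟩
  exact fun g hg ↦ (hG.isPreconnected.commute_of_finite_commutators G.one_mem hcomm hg).eq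
end
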